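/- arXiv:2512.01593 — 6 statements merged into one kernel-verified Lean document; each statement's English description precedes it below -/
import Mathlib

section
/- Let γ(t) = α(t) + ε β(t) be a non-degenerate curve in 𝔻², i.e., det(α'(t), α''(t)) ≠ 0 for all t ∈ I. Then γ admits an equiaffine arc-length reparametrization (a reparametrization s with det(γ'(s), γ''(s)) = 1 as a dual number for all s) if and only if det(α'(t), β''(t)) + det(β'(t), α''(t)) = 0 for all t ∈ I. -/
open Set Filter Function
open scoped Topology NNReal ENNReal

/-- The standard area form (2×2 determinant) on the real plane. -/
noncomputable def det2 (u v : ℝ × ℝ) : ℝ := u.1 * v.2 - u.2 * v.1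

namespace Stmt2Helpers

/-! ### The real cube root -/

lemma cube_strictMono : StrictMono (fun x : ℝ => x ^ 3) :=
  Odd.strictMono_pow (by decide)

lemma cube_surj : Function.Surjective (fun x : ℝ => x ^ 3) := by
  intro y
  rcases le_or_gt 0 y with hy | hy
  · refine ⟨y ^ (3⁻¹ : ℝ), ?_⟩
    have : (y ^ (3⁻¹ : ℝ)) ^ (3 : ℕ) = y := by
      rw [← Real.rpow_natCast (y ^ (3⁻¹ : ℝ)) 3, ← Real.rpow_mul hy]
      norm_num
    simpa using this
  · refine ⟨-((-y) ^ (3⁻¹ : ℝ)), ?_⟩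
    have h1 : (0:ℝ) ≤ -y := by linarith
    have h2 : ((-y) ^ (3⁻¹ : ℝ)) ^ (3 : ℕ) = -y := by
      rw [← Real.rpow_natCast ((-y) ^ (3⁻¹ : ℝ)) 3, ← Real.rpow_mul h1]
      norm_num
    show (-((-y) ^ (3⁻¹ : ℝ))) ^ (3:ℕ) = y
    rw [Odd.neg_pow (by decide), h2, neg_neg]

/-- The real cube root. -/
noncomputable def cr : ℝ → ℝ := Function.invFun (fun x : ℝ => x ^ 3)

lemma cr_cube (y : ℝ) : (cr y) ^ 3 = y := Function.invFun_eq (cube_surj y)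

/-! ### A smooth-inverse lemma -/

theorem key_inv {f φ : ℝ → ℝ} {s : Set ℝ} {t d : ℝ} (hs : IsOpen s) (ht : t ∈ s)
    (hf : ContDiffAt ℝ (⊤ : ℕ∞) f t) (hd : HasDerivAt f d t) (hd0 : d ≠ 0)
    (hinj : Set.InjOn f s) (hev : ∀ᶠ y in 𝓝 (f t), φ y ∈ s ∧ f (φ y) = y) :
    ContDiffAt ℝ (⊤ : ℕ∞) φ (f t) ∧ HasDerivAt φ d⁻¹ (f t) := by
  have hfd := hd.hasFDerivAt_equiv hd0
  have hL1 : ContDiffAt ℝ (⊤ : ℕ∞) (hf.localInverse hfd (by simp)) (f t) :=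
    hf.to_localInverse hfd (by simp)
  have hL2 : hf.localInverse hfd (by simp) (f t) = t :=
    hf.localInverse_apply_image hfd (by simp)
  have hretr : ∀ᶠ y in 𝓝 (f t), f (hf.localInverse hfd (by simp) y) = y :=
    (hf.hasStrictFDerivAt' hfd (by simp)).eventually_right_inverse
  have hLs : ∀ᶠ y in 𝓝 (f t), hf.localInverse hfd (by simp) y ∈ s :=
    hL1.continuousAt.eventually_mem (by rw [hL2]; exact hs.mem_nhds ht)
  have heq : ∀ᶠ y in 𝓝 (f t), φ y = hf.localInverse hfd (by simp) y := by
    filter_upwards [hev, hretr, hLs] with y h1 h2 h3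
    exact hinj h1.1 h3 (h1.2.trans h2.symm)
  have hφc : ContDiffAt ℝ (⊤ : ℕ∞) φ (f t) := hL1.congr_of_eventuallyEq heq
  have hleft : ∀ᶠ x in 𝓝 t, φ (f x) = x := by
    filter_upwards [hd.continuousAt.eventually hev, hs.eventually_mem ht] with x h1 h2
    exact hinj h1.1 h2 h1.2
  have hstrict : HasStrictDerivAt f d t := by
    have := hf.hasStrictDerivAt (by simp)
    rwa [hd.deriv] at this
  exact ⟨hφc, (hstrict.to_local_left_inverse hd0 hleft).hasDerivAt⟩

lemma contDiffAt_cr {y : ℝ} (hy : y ≠ 0) : ContDiffAt ℝ (⊤ : ℕ∞) cr y := by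
  have h3 : (cr y) ^ 3 = y := cr_cube y
  have key := key_inv (f := fun x : ℝ => x ^ 3) (φ := cr) (s := univ)
    isOpen_univ (mem_univ (cr y)) ((contDiff_id.pow 3).contDiffAt)
    (hasDerivAt_pow 3 (cr y))
    (by
      have hcr0 : cr y ≠ 0 := fun h => hy (by rw [← h3, h]; ring)
      positivity)
    (cube_strictMono.injective.injOn)
    (Eventually.of_forall fun z => ⟨mem_univ _, cr_cube z⟩)
  have : (fun x : ℝ => x ^ 3) (cr y) = y := h3
  rw [h3] at key
  exact key.1

/-! ### The antiderivative of a real-analytic function is real-analytic -/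

end Stmt2Helpers

namespace Stmt2Helpers

lemma deriv_top {f : ℝ → ℝ × ℝ} (hf : ContDiff ℝ (⊤ : ℕ∞) f) : ContDiff ℝ (⊤ : ℕ∞) (deriv f) := by
  have h' : ContDiff ℝ (((⊤ : ℕ∞) : WithTop ℕ∞) + 1) f := by rw [show (((⊤ : ℕ∞) : WithTop ℕ∞) + 1) = ((⊤ : ℕ∞) : WithTop ℕ∞) by simp]; exact hf
  exact (contDiff_succ_iff_deriv.1 h').2.2

theorem comp_derivs {φ : ℝ → ℝ} {J : Set ℝ} (hJ : IsOpen J) (hφ : ContDiffOn ℝ (⊤ : ℕ∞) φ J)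
    {f : ℝ → ℝ × ℝ} (hf : ContDiff ℝ (⊤ : ℕ∞) f) {s : ℝ} (hs : s ∈ J) :
    deriv (f ∘ φ) s = deriv φ s • deriv f (φ s) ∧
    deriv (deriv (f ∘ φ)) s = deriv (deriv φ) s • deriv f (φ s) +
      ((deriv φ s) ^ 2) • deriv (deriv f) (φ s) := by
  have hf1 : Differentiable ℝ f := hf.differentiable (by simp)
  have hf' : ContDiff ℝ (⊤ : ℕ∞) (deriv f) := deriv_top hf
  have hdφ : ∀ u ∈ J, HasDerivAt φ (deriv φ u) u := fun u hu =>
    ((hφ.contDiffAt (hJ.mem_nhds hu)).differentiableAt (by simp)).hasDerivAt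
  have hstep1 : ∀ u ∈ J, deriv (f ∘ φ) u = deriv φ u • deriv f (φ u) := fun u hu =>
    (((hf1 (φ u)).hasDerivAt).scomp u (hdφ u hu)).deriv
  refine ⟨hstep1 s hs, ?_⟩
  have hev : deriv (f ∘ φ) =ᶠ[𝓝 s] fun u => deriv φ u • deriv f (φ u) := by
    filter_upwards [hJ.mem_nhds hs] with u hu using hstep1 u hu
  rw [hev.deriv_eq]
  have h1 : HasDerivAt (deriv φ) (deriv (deriv φ) s) s := by
    have h2 := (hφ.deriv_of_isOpen (m := ((⊤ : ℕ∞) : WithTop ℕ∞)) hJ (by simp)).contDiffAt (hJ.mem_nhds hs)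
    exact (h2.differentiableAt (by simp)).hasDerivAt
  have h2 : HasDerivAt (fun u => deriv f (φ u)) (deriv φ s • deriv (deriv f) (φ s)) s :=
    ((hf'.differentiable (by simp) (φ s)).hasDerivAt).scomp s (hdφ s hs)
  rw [HasDerivAt.deriv (f := fun u => deriv φ u • deriv f (φ u)) (h1.smul h2), smul_smul, sq, add_comm]

lemma det2_smul₁ (p q : ℝ) (u v : ℝ × ℝ) :
    det2 (p • u) (q • u + p ^ 2 • v) = p ^ 3 * det2 u v := by
  simp only [det2, Prod.smul_fst, Prod.smul_snd, Prod.fst_add, Prod.snd_add, smul_eq_mul]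
  ring

lemma det2_smul₂ (p q : ℝ) (a b a' b' : ℝ × ℝ) :
    det2 (p • a) (q • b + p ^ 2 • b') + det2 (p • b) (q • a + p ^ 2 • a')
      = p ^ 3 * (det2 a b' + det2 b a') := by
  simp only [det2, Prod.smul_fst, Prod.smul_snd, Prod.fst_add, Prod.snd_add, smul_eq_mul]
  ring

end Stmt2Helpers

open Stmt2Helpers in
/-- A non-degenerate dual curve `γ = α + ε β` admits an equiaffine arc-length
reparametrization (i.e. a reparametrization after which the dual determinant
`det(γ', γ'') = det(α',α'') + ε[det(α',β'') + det(β',α'')]` is the dual number `1 + ε·0`)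
if and only if `det(α', β'') + det(β', α'') = 0` identically. -/
theorem stmt2 (I : Set ℝ) (hIopen : IsOpen I) (hIconn : I.OrdConnected)
    (α β : ℝ → ℝ × ℝ) (hα : ContDiff ℝ (⊤ : ℕ∞) α) (hβ : ContDiff ℝ (⊤ : ℕ∞) β)
    (hnd : ∀ t ∈ I, det2 (deriv α t) (deriv (deriv α) t) ≠ 0) :
    (∃ (J : Set ℝ) (φ : ℝ → ℝ), IsOpen J ∧ ContDiffOn ℝ (⊤ : ℕ∞) φ J ∧
      Set.InjOn φ J ∧ φ '' J = I ∧
      ∀ s ∈ J,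
        det2 (deriv (α ∘ φ) s) (deriv (deriv (α ∘ φ)) s) = 1 ∧
        det2 (deriv (α ∘ φ) s) (deriv (deriv (β ∘ φ)) s) +
          det2 (deriv (β ∘ φ) s) (deriv (deriv (α ∘ φ)) s) = 0) ↔
    (∀ t ∈ I, det2 (deriv α t) (deriv (deriv β) t) +
        det2 (deriv β t) (deriv (deriv α) t) = 0) := by
  constructor
  · rintro ⟨J, φ, hJo, hφ, hinjφ, himg, hprop⟩ t ht
    rw [← himg] at ht
    obtain ⟨s, hsJ, rfl⟩ := ht
    obtain ⟨h1, h2⟩ := hprop s hsJ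
    obtain ⟨e11, e12⟩ := comp_derivs hJo hφ hα hsJ
    obtain ⟨e21, e22⟩ := comp_derivs hJo hφ hβ hsJ
    rw [e11, e12, det2_smul₁] at h1
    rw [e11, e12, e21, e22, det2_smul₂] at h2
    have hp3 : (deriv φ s) ^ 3 ≠ 0 := by
      intro h0
      rw [h0, zero_mul] at h1
      exact zero_ne_one h1
    exact (mul_eq_zero.1 h2).resolve_left hp3
  · intro hD
    rcases eq_empty_or_nonempty I with rfl | ⟨t₀, ht₀⟩
    · exact ⟨∅, id, isOpen_empty, contDiff_id.contDiffOn, Set.injOn_empty _, by simp,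
        fun s hs => absurd hs (notMem_empty s)⟩
    set G : ℝ → ℝ := fun t => det2 (deriv α t) (deriv (deriv α) t) with hGdef
    have hα' : ContDiff ℝ (⊤ : ℕ∞) (deriv α) := deriv_top hα
    have hα'' : ContDiff ℝ (⊤ : ℕ∞) (deriv (deriv α)) := deriv_top hα'
    have hGsm : ContDiff ℝ (⊤ : ℕ∞) G := by
      have h1 := (contDiff_fst.comp hα').mul (contDiff_snd.comp hα'')
      have h2 := (contDiff_snd.comp hα').mul (contDiff_fst.comp hα'')
      exact h1.sub h2
    set h : ℝ → ℝ := fun t => Stmt2Helpers.cr (G t) with hhdef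
    have hcube : ∀ t, h t ^ 3 = G t := fun t => cr_cube _
    have hhne : ∀ t ∈ I, h t ≠ 0 := fun t ht h0 => hnd t ht (by show G t = 0; rw [← hcube t, h0]; ring)
    have hh_an : ∀ t ∈ I, ContDiffAt ℝ (⊤ : ℕ∞) h t := fun t ht =>
      (contDiffAt_cr (hnd t ht)).comp t hGsm.contDiffAt
    have hhcontI : ContinuousOn h I := fun t ht =>
      ((hh_an t ht).continuousAt).continuousWithinAt
    have hconv : Convex ℝ I := hIconn.convex
    set sF : ℝ → ℝ := fun u => ∫ x in t₀..u, h x with hsFdef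
    have hsFd : ∀ y ∈ I, HasDerivAt sF (h y) y := by
      intro y hy
      apply intervalIntegral.integral_hasDerivAt_right
      · exact (hhcontI.mono (hIconn.uIcc_subset ht₀ hy)).intervalIntegrable
      · exact hhcontI.stronglyMeasurableAtFilter hIopen y hy
      · exact (hh_an y hy).continuousAt
    have hsF_an : ∀ t ∈ I, ContDiffAt ℝ (⊤ : ℕ∞) sF t := by
      intro t ht
      have hon : ContDiffOn ℝ (⊤ : ℕ∞) sF I := by
        rw [contDiffOn_infty_iff_deriv_of_isOpen hIopen]
        refine ⟨fun y hy => (hsFd y hy).differentiableAt.differentiableWithinAt, ?_⟩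
        have hhon : ContDiffOn ℝ (⊤ : ℕ∞) h I := fun y hy => (hh_an y hy).contDiffWithinAt
        exact hhon.congr (fun y hy => (hsFd y hy).deriv)
      exact hon.contDiffAt (hIopen.mem_nhds ht)
    have hderiv_eq : ∀ y ∈ I, deriv sF y = h y := fun y hy => (hsFd y hy).deriv
    have hsFcont : ContinuousOn sF I := fun y hy =>
      (hsFd y hy).continuousAt.continuousWithinAt
    have hsign : (∀ t ∈ I, 0 < h t) ∨ (∀ t ∈ I, h t < 0) := by
      rcases (hhne t₀ ht₀).lt_or_gt with hneg | hpos
      · right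
        intro t ht
        by_contra hle
        push_neg at hle
        have h0 : 0 < h t := lt_of_le_of_ne hle (Ne.symm (hhne t ht))
        have hsub : uIcc t₀ t ⊆ I := hIconn.uIcc_subset ht₀ ht
        have hIVT := intermediate_value_uIcc (hhcontI.mono hsub)
        have h0mem : (0:ℝ) ∈ uIcc (h t₀) (h t) := by
          rw [Set.mem_uIcc]; left; exact ⟨hneg.le, h0.le⟩
        obtain ⟨z, hz, hz0⟩ := hIVT h0mem
        exact hhne z (hsub hz) hz0
      · left
        intro t ht
        by_contra hle
        push_neg at hle
        have h0 : h t < 0 := lt_of_le_of_ne hle (hhne t ht)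
        have hsub : uIcc t₀ t ⊆ I := hIconn.uIcc_subset ht₀ ht
        have hIVT := intermediate_value_uIcc (hhcontI.mono hsub)
        have h0mem : (0:ℝ) ∈ uIcc (h t₀) (h t) := by
          rw [Set.mem_uIcc]; right; exact ⟨h0.le, hpos.le⟩
        obtain ⟨z, hz, hz0⟩ := hIVT h0mem
        exact hhne z (hsub hz) hz0
    have hinj : Set.InjOn sF I := by
      rcases hsign with hpos | hneg
      · refine (strictMonoOn_of_deriv_pos hconv hsFcont fun x hx => ?_).injOn
        rw [hIopen.interior_eq] at hx
        rw [hderiv_eq x hx]; exact hpos x hx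
      · refine (strictAntiOn_of_deriv_neg hconv hsFcont fun x hx => ?_).injOn
        rw [hIopen.interior_eq] at hx
        rw [hderiv_eq x hx]; exact hneg x hx
    set J := sF '' I with hJdef
    have hJo : IsOpen J := by
      rw [isOpen_iff_mem_nhds]
      rintro s ⟨t, ht, rfl⟩
      have hstrict : HasStrictDerivAt sF (h t) t := by
        have := (hsF_an t ht).hasStrictDerivAt (by simp)
        rwa [hderiv_eq t ht] at this
      rw [← hstrict.map_nhds_eq (hhne t ht)]
      exact image_mem_map (hIopen.mem_nhds ht)
    set φ : ℝ → ℝ := Function.invFunOn sF I with hφdef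
    have hφleft : ∀ t ∈ I, φ (sF t) = t := fun t ht => hinj.leftInvOn_invFunOn ht
    have hφJ : ∀ s ∈ J, φ s ∈ I ∧ sF (φ s) = s := by
      rintro s ⟨t, ht, rfl⟩
      rw [hφleft t ht]
      exact ⟨ht, rfl⟩
    have himg : φ '' J = I := by
      apply Subset.antisymm
      · rintro _ ⟨s, hs, rfl⟩; exact (hφJ s hs).1
      · intro t ht; exact ⟨sF t, mem_image_of_mem _ ht, hφleft t ht⟩
    have hinjφ : Set.InjOn φ J := fun s₁ h₁ s₂ h₂ he => by
      rw [← (hφJ s₁ h₁).2, ← (hφJ s₂ h₂).2, he]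
    have hφkey : ∀ s ∈ J, ContDiffAt ℝ (⊤ : ℕ∞) φ s ∧ HasDerivAt φ (h (φ s))⁻¹ s := by
      rintro s ⟨t, ht, rfl⟩
      have hev : ∀ᶠ y in 𝓝 (sF t), φ y ∈ I ∧ sF (φ y) = y := by
        filter_upwards [hJo.eventually_mem (mem_image_of_mem _ ht)] with y hy using hφJ y hy
      have hk := key_inv hIopen ht (hsF_an t ht) (hsFd t ht) (hhne t ht) hinj hev
      refine ⟨hk.1, ?_⟩
      rw [hφleft t ht]
      exact hk.2
    have hφsm : ContDiffOn ℝ (⊤ : ℕ∞) φ J := fun s hs => ((hφkey s hs).1).contDiffWithinAt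
    refine ⟨J, φ, hJo, hφsm, hinjφ, himg, ?_⟩
    intro s hsJ
    obtain ⟨e11, e12⟩ := comp_derivs hJo hφsm hα hsJ
    obtain ⟨e21, e22⟩ := comp_derivs hJo hφsm hβ hsJ
    have htI : φ s ∈ I := (hφJ s hsJ).1
    have hps : deriv φ s = (h (φ s))⁻¹ := ((hφkey s hsJ).2).deriv
    constructor
    · rw [e11, e12, det2_smul₁, hps]
      have hGh : det2 (deriv α (φ s)) (deriv (deriv α) (φ s)) = h (φ s) ^ 3 := (hcube (φ s)).symm
      rw [hGh, inv_pow]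
      exact inv_mul_cancel₀ (pow_ne_zero 3 (hhne (φ s) htI))
    · rw [e11, e12, e21, e22, det2_smul₂, hD (φ s) htI, mul_zero]
end

section
/- Let α : I → ℝ² satisfy det(α', α'') = 1 with equiaffine curvature κ_α = det(α'', α'''), and let β : I → ℝ² be smooth with β' = x α' + y α'' for smooth real functions x, y on I. Set γ = α + ε β. Then γ is parametrized by equiaffine arc-length (det(γ',γ'')=1) and κ_γ = κ_α if and only if 2x + y' = 0 and y''' + 4 κ_α y' + 2 κ_α' y = 0 on I. -/
lemma my_smooth_deriv {F : Type*} [NormedAddCommGroup F] [NormedSpace ℝ F]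
    {f : ℝ → F} (h : ContDiff ℝ (⊤ : ℕ∞) f) :
    ContDiff ℝ (⊤ : ℕ∞) (deriv f) ∧ ∀ s, HasDerivAt f (deriv f s) s := by
  have e : ((⊤ : ℕ∞) : WithTop ℕ∞) = ((⊤ : ℕ∞) : WithTop ℕ∞) + 1 := by
    rw [← WithTop.coe_one, ← WithTop.coe_add, top_add]
  rw [e, contDiff_succ_iff_deriv] at h
  exact ⟨h.2.2, fun s => (h.1 s).hasDerivAt⟩

lemma my_hasDerivAt_fst {f : ℝ → ℝ × ℝ} {f' : ℝ × ℝ} {s : ℝ} (hf : HasDerivAt f f' s) :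
    HasDerivAt (fun t => (f t).1) f'.1 s := by
  exact ((ContinuousLinearMap.fst ℝ ℝ ℝ).hasFDerivAt (x := f s)).comp_hasDerivAt s hf

lemma my_hasDerivAt_snd {f : ℝ → ℝ × ℝ} {f' : ℝ × ℝ} {s : ℝ} (hf : HasDerivAt f f' s) :
    HasDerivAt (fun t => (f t).2) f'.2 s := by
  exact ((ContinuousLinearMap.snd ℝ ℝ ℝ).hasFDerivAt (x := f s)).comp_hasDerivAt s hf

lemma my_hasDerivAt_det2 {f g : ℝ → ℝ × ℝ} {f' g' : ℝ × ℝ} {s : ℝ}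
    (hf : HasDerivAt f f' s) (hg : HasDerivAt g g' s) :
    HasDerivAt (fun t => det2 (f t) (g t)) (det2 f' (g s) + det2 (f s) g') s := by
  have h := ((my_hasDerivAt_fst hf).mul (my_hasDerivAt_snd hg)).sub
    ((my_hasDerivAt_snd hf).mul (my_hasDerivAt_fst hg))
  refine h.congr_deriv ?_
  simp [det2]; ring

/-- Theorem 3 of the paper. Let `α` be parametrized by equiaffine arc-length in `ℝ²`
with equiaffine curvature `κ_α = det(α'',α''')`, and let `β' = x α' + y α''`.
Then `γ = α + ε β` is parametrized by equiaffine arc-length in `𝔻²`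
(the dual part `det(α',β'') + det(β',α'')` of `det(γ',γ'')` vanishes) and
`κ_γ = κ_α` (the dual part `det(α'',β''') + det(β'',α''')` of `κ_γ` vanishes)
if and only if `2x + y' = 0` and `y''' + 4 κ_α y' + 2 κ_α' y = 0` on `I`. -/
theorem stmt6 (I : Set ℝ) (hIopen : IsOpen I) (α β : ℝ → ℝ × ℝ) (x y : ℝ → ℝ)
    (hα : ContDiff ℝ (⊤ : ℕ∞) α) (hβ : ContDiff ℝ (⊤ : ℕ∞) β)
    (hx : ContDiff ℝ (⊤ : ℕ∞) x) (hy : ContDiff ℝ (⊤ : ℕ∞) y)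
    (harcα : ∀ s ∈ I, det2 (deriv α s) (deriv (deriv α) s) = 1)
    (κα : ℝ → ℝ)
    (hκα : ∀ s, κα s = det2 (deriv (deriv α) s) (deriv (deriv (deriv α)) s))
    (hdecomp : ∀ s ∈ I, deriv β s = x s • deriv α s + y s • deriv (deriv α) s) :
    (∀ s ∈ I,
      det2 (deriv α s) (deriv (deriv β) s) + det2 (deriv β s) (deriv (deriv α) s) = 0 ∧
      det2 (deriv (deriv α) s) (deriv (deriv (deriv β)) s) +
        det2 (deriv (deriv β) s) (deriv (deriv (deriv α)) s) = 0) ↔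
    (∀ s ∈ I,
      2 * x s + deriv y s = 0 ∧
      deriv (deriv (deriv y)) s + 4 * κα s * deriv y s + 2 * deriv κα s * y s = 0) := by
  -- smoothness of iterated derivatives and HasDerivAt facts
  obtain ⟨hα1, dA0⟩ := my_smooth_deriv hα
  obtain ⟨hα2, dA1⟩ := my_smooth_deriv hα1
  obtain ⟨hα3, dA2⟩ := my_smooth_deriv hα2
  obtain ⟨_, dA3⟩ := my_smooth_deriv hα3
  obtain ⟨hx1, dx0⟩ := my_smooth_deriv hx
  obtain ⟨hx2, dx1⟩ := my_smooth_deriv hx1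
  obtain ⟨hy1, dy0⟩ := my_smooth_deriv hy
  obtain ⟨hy2, dy1⟩ := my_smooth_deriv hy1
  obtain ⟨hy3, dy2⟩ := my_smooth_deriv hy2
  -- notation
  set A1 := deriv α with hA1def
  set A2 := deriv A1 with hA2def
  set A3 := deriv A2 with hA3def
  set A4 := deriv A3 with hA4def
  -- det2 (A1 s) (A3 s) = 0 on I
  have hA13 : ∀ s ∈ I, det2 (A1 s) (A3 s) = 0 := by
    intro s hs
    have hF : HasDerivAt (fun t => det2 (A1 t) (A2 t))
        (det2 (A2 s) (A2 s) + det2 (A1 s) (A3 s)) s :=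
      my_hasDerivAt_det2 (dA1 s) (dA2 s)
    have hev : (fun t => det2 (A1 t) (A2 t)) =ᶠ[nhds s] fun _ => (1 : ℝ) :=
      Filter.eventuallyEq_of_mem (hIopen.mem_nhds hs) (fun t ht => harcα t ht)
    have h0 : deriv (fun t => det2 (A1 t) (A2 t)) s = 0 := by
      rw [hev.deriv_eq]; simp
    rw [hF.deriv] at h0
    have : det2 (A2 s) (A2 s) = 0 := by simp [det2]; ring
    linarith
  -- derivative of κα
  have hκ' : ∀ s, deriv κα s = det2 (A2 s) (A4 s) := by
    intro s
    have hκfun : κα = fun t => det2 (A2 t) (A3 t) := funext hκα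
    have hK : HasDerivAt (fun t => det2 (A2 t) (A3 t))
        (det2 (A3 s) (A3 s) + det2 (A2 s) (A4 s)) s :=
      my_hasDerivAt_det2 (dA2 s) (dA3 s)
    have : det2 (A3 s) (A3 s) = 0 := by simp [det2]; ring
    rw [hκfun, hK.deriv, this, zero_add]
  -- the derivative of β' on I
  have dG1 : ∀ s, HasDerivAt (fun t => x t • A1 t + y t • A2 t)
      ((x s • A2 s + deriv x s • A1 s) + (y s • A3 s + deriv y s • A2 s)) s :=
    fun s => ((dx0 s).smul (dA1 s)).add ((dy0 s).smul (dA2 s))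
  have hB2 : ∀ s ∈ I, deriv (deriv β) s
      = (x s • A2 s + deriv x s • A1 s) + (y s • A3 s + deriv y s • A2 s) := by
    intro s hs
    have hev : deriv β =ᶠ[nhds s] fun t => x t • A1 t + y t • A2 t :=
      Filter.eventuallyEq_of_mem (hIopen.mem_nhds hs) (fun t ht => hdecomp t ht)
    rw [hev.deriv_eq, (dG1 s).deriv]
  -- the second derivative of β' on I
  have dG2 : ∀ s, HasDerivAt
      (fun t => (x t • A2 t + deriv x t • A1 t) + (y t • A3 t + deriv y t • A2 t))
      (((x s • A3 s + deriv x s • A2 s) + (deriv x s • A2 s + deriv (deriv x) s • A1 s))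
        + ((y s • A4 s + deriv y s • A3 s) + (deriv y s • A3 s + deriv (deriv y) s • A2 s))) s :=
    fun s => ((((dx0 s).smul (dA2 s)).add ((dx1 s).smul (dA1 s))).add
      (((dy0 s).smul (dA3 s)).add ((dy1 s).smul (dA2 s))))
  have hB3 : ∀ s ∈ I, deriv (deriv (deriv β)) s
      = ((x s • A3 s + deriv x s • A2 s) + (deriv x s • A2 s + deriv (deriv x) s • A1 s))
        + ((y s • A4 s + deriv y s • A3 s) + (deriv y s • A3 s + deriv (deriv y) s • A2 s)) := by
    intro s hs
    have hev : deriv (deriv β) =ᶠ[nhds s]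
        fun t => (x t • A2 t + deriv x t • A1 t) + (y t • A3 t + deriv y t • A2 t) :=
      Filter.eventuallyEq_of_mem (hIopen.mem_nhds hs) (fun t ht => hB2 t ht)
    rw [hev.deriv_eq, (dG2 s).deriv]
  -- identity for the first dual part
  have hp : ∀ s ∈ I,
      det2 (A1 s) (deriv (deriv β) s) + det2 (deriv β s) (A2 s) = 2 * x s + deriv y s := by
    intro s hs
    rw [hB2 s hs, hdecomp s hs]
    have h1 := harcα s hs
    have h2 := hA13 s hs
    simp only [det2, Prod.fst_add, Prod.snd_add, Prod.smul_fst, Prod.smul_snd,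
      smul_eq_mul] at h1 h2 ⊢
    linear_combination (2 * x s + deriv y s) * h1 + y s * h2
  -- identity for the second dual part
  have hq : ∀ s ∈ I,
      det2 (A2 s) (deriv (deriv (deriv β)) s) + det2 (deriv (deriv β) s) (A3 s)
        = -(deriv (deriv x) s) + (2 * x s + 3 * deriv y s) * κα s + y s * deriv κα s := by
    intro s hs
    rw [hB3 s hs, hB2 s hs, hκα s, hκ' s]
    have h1 := harcα s hs
    have h2 := hA13 s hs
    simp only [det2, Prod.fst_add, Prod.snd_add, Prod.smul_fst, Prod.smul_snd,
      smul_eq_mul] at h1 h2 ⊢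
    linear_combination (-(deriv (deriv x) s)) * h1 + (deriv x s) * h2
  -- derivatives of the constraint 2x + y' = 0 on I
  have hconstr : ∀ (h : ∀ s ∈ I, 2 * x s + deriv y s = 0),
      ∀ s ∈ I, 2 * deriv (deriv x) s + deriv (deriv (deriv y)) s = 0 := by
    intro h
    have h1 : ∀ s ∈ I, 2 * deriv x s + deriv (deriv y) s = 0 := by
      intro s hs
      have hev : (fun t => 2 * x t + deriv y t) =ᶠ[nhds s] fun _ => (0 : ℝ) :=
        Filter.eventuallyEq_of_mem (hIopen.mem_nhds hs) (fun t ht => h t ht)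
      have hD : HasDerivAt (fun t => 2 * x t + deriv y t)
          (2 * deriv x s + deriv (deriv y) s) s := by
        exact (((hasDerivAt_const s (2:ℝ)).mul (dx0 s)).add (dy1 s)).congr_deriv (by ring)
      have := hev.deriv_eq
      rw [hD.deriv] at this
      simpa using this
    intro s hs
    have hev : (fun t => 2 * deriv x t + deriv (deriv y) t) =ᶠ[nhds s] fun _ => (0 : ℝ) :=
      Filter.eventuallyEq_of_mem (hIopen.mem_nhds hs) (fun t ht => h1 t ht)
    have hD : HasDerivAt (fun t => 2 * deriv x t + deriv (deriv y) t)
        (2 * deriv (deriv x) s + deriv (deriv (deriv y)) s) s := by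
      exact (((hasDerivAt_const s (2:ℝ)).mul (dx1 s)).add (dy2 s)).congr_deriv (by ring)
    have := hev.deriv_eq
    rw [hD.deriv] at this
    simpa using this
  constructor
  · intro h s hs
    have hxy : ∀ t ∈ I, 2 * x t + deriv y t = 0 := by
      intro t ht
      have := (h t ht).1
      rw [hp t ht] at this
      exact this
    refine ⟨hxy s hs, ?_⟩
    have hq0 := (h s hs).2
    rw [hq s hs] at hq0
    have hd := hconstr hxy s hs
    have hxys := hxy s hs
    linear_combination 2 * hq0 + hd - 2 * κα s * hxys
  · intro h s hs
    have hxy : ∀ t ∈ I, 2 * x t + deriv y t = 0 := fun t ht => (h t ht).1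
    have hd := hconstr hxy s hs
    have hxys := hxy s hs
    have h2 := (h s hs).2
    constructor
    · rw [hp s hs]; exact hxys
    · rw [hq s hs]
      linear_combination (1/2) * h2 - (1/2) * hd + κα s * hxys
end

section
/- Let α(s) = (s, s²/2) and β(s) = (c₀ s² + c₁ s, -(c₁/2) s² + c₂ s) + β₀ for real constants c₀, c₁, c₂ and a constant vector β₀ ∈ ℝ². Then the dual curve γ = α + ε β satisfies det(γ', γ'') = 1 (as a dual number) and has equiaffine curvature κ_γ ≡ 0 (i.e., det(γ'', γ''') = 0 as a dual number). -/
/-!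
Both `α` and `β` are quadratic curves `s ↦ s² a + s b + c`, with derivatives `2s a + b`,
the constant `2a`, and `0`. Hence `γ''' = 0`, which kills both parts of `κ_γ = det(γ'', γ''')`,
while both parts of `det(γ', γ'')` reduce to polynomial identities in which the `s`-terms cancel.
-/

section QuadraticCurve

variable {E : Type*} [NormedAddCommGroup E] [NormedSpace ℝ E] (a b c : E)

theorem deriv_smul_add_const : deriv (fun t : ℝ => t • a + b) = fun _ => a :=
  funext fun s => (((hasDerivAt_id s).smul_const a).add_const b).deriv.trans (one_smul ℝ a)

theorem deriv_sq_smul_add_smul_add_const :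
    deriv (fun t : ℝ => t ^ 2 • a + t • b + c) = fun t => t • (2 : ℝ) • a + b := by
  funext s
  have h : HasDerivAt (fun t : ℝ => t ^ 2 • a + t • b + c) ((2 * s) • a + (1 : ℝ) • b) s := by
    simpa using (((hasDerivAt_pow 2 s).smul_const a).add
      ((hasDerivAt_id s).smul_const b)).add_const c
  rw [h.deriv, one_smul, smul_smul, mul_comm]

end QuadraticCurve

/-- For `α(s) = (s, s²/2)` and `β(s) = (c₀s² + c₁s, -(c₁/2)s² + c₂s) + β₀`, the dual
curve `γ = α + εβ` satisfies `det(γ',γ'') = 1 + ε·0` and `κ_γ = det(γ'',γ''') = 0 + ε·0`. -/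
theorem stmt7 (c₀ c₁ c₂ : ℝ) (β₀ : ℝ × ℝ) (α β : ℝ → ℝ × ℝ)
    (hαdef : ∀ s, α s = (s, s ^ 2 / 2))
    (hβdef : ∀ s, β s = (c₀ * s ^ 2 + c₁ * s, -(c₁ / 2) * s ^ 2 + c₂ * s) + β₀) :
    ∀ s : ℝ,
      det2 (deriv α s) (deriv (deriv α) s) = 1 ∧
      det2 (deriv α s) (deriv (deriv β) s) + det2 (deriv β s) (deriv (deriv α) s) = 0 ∧
      det2 (deriv (deriv α) s) (deriv (deriv (deriv α)) s) = 0 ∧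
      det2 (deriv (deriv α) s) (deriv (deriv (deriv β)) s) +
        det2 (deriv (deriv β) s) (deriv (deriv (deriv α)) s) = 0 := by
  have hα : α = fun t : ℝ => t ^ 2 • ((0 : ℝ), (1 / 2 : ℝ)) + t • ((1 : ℝ), (0 : ℝ)) + 0 := by
    funext t
    rw [hαdef]
    ext <;> simp [div_eq_mul_inv]
  have hβ : β = fun t : ℝ => t ^ 2 • (c₀, -(c₁ / 2)) + t • (c₁, c₂) + β₀ := by
    funext t
    rw [hβdef]
    ext <;> simp <;> ring
  intro s
  simp only [hα, hβ, deriv_sq_smul_add_smul_add_const, deriv_smul_add_const, deriv_const]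
  simp only [det2, Prod.fst_add, Prod.snd_add, Prod.smul_fst, Prod.smul_snd, Prod.fst_zero,
    Prod.snd_zero, smul_eq_mul]
  refine ⟨by ring, by ring, by ring, by ring⟩
end

section
/- Let γ(s) = α(s) + ε β(s) with α(s) = (s, s²/2), parametrized by equiaffine arc-length in 𝔻² (det(γ',γ'') = 1 as a dual number). Suppose the equiaffine curvature satisfies κ_γ(s) = ε m for all s, with m ∈ ℝ. Then there exist constants c₀, c₁, c₂ ∈ ℝ and β₀ ∈ ℝ² such that β(s) = (-m s³/6 + c₀ s² + c₁ s, -m s⁴/24 - (c₁/2) s² + c₂ s) + β₀. -/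
private lemma int_step (f g : ℝ → ℝ) (hf : Differentiable ℝ f) (hg : Differentiable ℝ g)
    (h : ∀ s, deriv f s = deriv g s) (h0 : f 0 = g 0) : ∀ s, f s = g s := by
  intro s
  have hc : ∀ x, deriv (fun t => f t - g t) x = 0 := by
    intro x
    rw [deriv_fun_sub (hf x) (hg x), h x, sub_self]
  have hcon := is_const_of_deriv_eq_zero (hf.sub hg) hc s 0
  simp only [Pi.sub_apply] at hcon
  linarith [hcon]

/-- If `γ = α + εβ` with `α(s) = (s, s²/2)` is parametrized by equiaffine arc-length
(`det(γ',γ'') = 1 + ε·0`) and its equiaffine curvature is the pure dual constant `ε m`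
(real part `det(α'',α''') = 0`, dual part `det(α'',β''') + det(β'',α''') = m`), then
`β(s) = (-m s³/6 + c₀ s² + c₁ s, -m s⁴/24 - (c₁/2) s² + c₂ s) + β₀` for some constants. -/
theorem stmt8 (m : ℝ) (α β : ℝ → ℝ × ℝ)
    (hβ : ContDiff ℝ (⊤ : ℕ∞) β)
    (hαdef : ∀ s, α s = (s, s ^ 2 / 2))
    (harc : ∀ s : ℝ,
      det2 (deriv α s) (deriv (deriv α) s) = 1 ∧
      det2 (deriv α s) (deriv (deriv β) s) + det2 (deriv β s) (deriv (deriv α) s) = 0)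
    (hκ : ∀ s : ℝ,
      det2 (deriv (deriv α) s) (deriv (deriv (deriv α)) s) = 0 ∧
      det2 (deriv (deriv α) s) (deriv (deriv (deriv β)) s) +
        det2 (deriv (deriv β) s) (deriv (deriv (deriv α)) s) = m) :
    ∃ (c₀ c₁ c₂ : ℝ) (β₀ : ℝ × ℝ), ∀ s : ℝ,
      β s = (-m * s ^ 3 / 6 + c₀ * s ^ 2 + c₁ * s,
             -m * s ^ 4 / 24 - c₁ / 2 * s ^ 2 + c₂ * s) + β₀ := by
  -- components of β
  set b1 : ℝ → ℝ := fun s => (β s).1 with hb1def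
  set b2 : ℝ → ℝ := fun s => (β s).2 with hb2def
  have hβi : ContDiff ℝ ((⊤ : ℕ∞) : WithTop ℕ∞) β := hβ.of_le (by simp)
  have hb1 : ContDiff ℝ ((⊤ : ℕ∞) : WithTop ℕ∞) b1 := contDiff_fst.comp hβi
  have hb2 : ContDiff ℝ ((⊤ : ℕ∞) : WithTop ℕ∞) b2 := contDiff_snd.comp hβi
  rw [contDiff_infty_iff_deriv] at hb1 hb2
  obtain ⟨hb1d, hb1'⟩ := hb1
  obtain ⟨hb2d, hb2'⟩ := hb2
  rw [contDiff_infty_iff_deriv] at hb1' hb2'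
  obtain ⟨hb1'd, hb1''⟩ := hb1'
  obtain ⟨hb2'd, hb2''⟩ := hb2'
  rw [contDiff_infty_iff_deriv] at hb1'' hb2''
  obtain ⟨hb1''d, _⟩ := hb1''
  obtain ⟨hb2''d, _⟩ := hb2''
  -- derivatives of β componentwise
  have hβeq : β = fun s => (b1 s, b2 s) := by funext s; rfl
  have hdβ : deriv β = fun s => (deriv b1 s, deriv b2 s) := by
    funext s
    rw [hβeq]
    exact (((hb1d s).hasDerivAt).prodMk ((hb2d s).hasDerivAt)).deriv
  have hdβ2 : deriv (deriv β) = fun s => (deriv (deriv b1) s, deriv (deriv b2) s) := by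
    funext s
    rw [hdβ]
    exact (((hb1'd s).hasDerivAt).prodMk ((hb2'd s).hasDerivAt)).deriv
  have hdβ3 : deriv (deriv (deriv β)) =
      fun s => (deriv (deriv (deriv b1)) s, deriv (deriv (deriv b2)) s) := by
    funext s
    rw [hdβ2]
    exact (((hb1''d s).hasDerivAt).prodMk ((hb2''d s).hasDerivAt)).deriv
  -- derivatives of α
  have hαeq : α = fun s => (s, s ^ 2 / 2) := funext hαdef
  have hdα : deriv α = fun s => ((1 : ℝ), s) := by
    funext s
    rw [hαeq]
    have h2 : HasDerivAt (fun s : ℝ => s ^ 2 / 2) s s := by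
      have := (hasDerivAt_pow 2 s).div_const 2
      refine this.congr_deriv ?_
      push_cast; ring
    exact ((hasDerivAt_id s).prodMk h2).deriv
  have hdα2 : deriv (deriv α) = fun _ => ((0 : ℝ), (1 : ℝ)) := by
    funext s
    rw [hdα]
    exact ((hasDerivAt_const s (1 : ℝ)).prodMk (hasDerivAt_id s)).deriv
  have hdα3 : deriv (deriv (deriv α)) = fun _ => ((0 : ℝ), (0 : ℝ)) := by
    funext s
    rw [hdα2]
    exact ((hasDerivAt_const s (0 : ℝ)).prodMk (hasDerivAt_const s (1 : ℝ))).deriv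
  -- scalar ODEs
  have hODE1 : ∀ s, deriv (deriv (deriv b1)) s = -m := by
    intro s
    have := (hκ s).2
    rw [hdα3, hdα2, hdβ3, hdβ2] at this
    simp only [det2] at this
    linarith
  have hODE2 : ∀ s, deriv (deriv b2) s = s * deriv (deriv b1) s - deriv b1 s := by
    intro s
    have := (harc s).2
    rw [hdα2, hdα, hdβ2, hdβ] at this
    simp only [det2] at this
    linarith
  -- integrate b1
  set d0 : ℝ := deriv (deriv b1) 0 with hd0
  set c₁ : ℝ := deriv b1 0 with hc₁
  set c₂ : ℝ := deriv b2 0 with hc₂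
  have stepA : ∀ s, deriv (deriv b1) s = -m * s + d0 := by
    have h := int_step (deriv (deriv b1)) (fun x => -m * x + d0) hb1''d
      ((differentiable_id.const_mul (-m)).add_const d0)
      (fun s => by
        rw [hODE1 s]
        have hh : HasDerivAt (fun x : ℝ => -m * x + d0) (-m * 1) s :=
          ((hasDerivAt_id s).const_mul (-m)).add_const d0
        rw [hh.deriv]; ring)
      (by simp [hd0])
    intro s; rw [h s]
  have stepB : ∀ s, deriv b1 s = -m * s ^ 2 / 2 + d0 * s + c₁ := by
    have h := int_step (deriv b1) (fun x => -m * x ^ 2 / 2 + (d0 * x + c₁)) hb1'd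
      ((((differentiable_pow 2).const_mul (-m)).div_const 2).add
        ((differentiable_id.const_mul d0).add_const c₁))
      (fun s => by
        rw [stepA s]
        have hh : HasDerivAt (fun x : ℝ => -m * x ^ 2 / 2 + (d0 * x + c₁))
            (-m * ((2 : ℕ) * s ^ 1) / 2 + d0 * 1) s :=
          (((hasDerivAt_pow 2 s).const_mul (-m)).div_const 2).add
            (((hasDerivAt_id s).const_mul d0).add_const c₁)
        rw [hh.deriv]; push_cast; ring)
      (by simp [hc₁])
    intro s; rw [h s]; ring
  have stepC : ∀ s, b1 s = -m * s ^ 3 / 6 + d0 / 2 * s ^ 2 + c₁ * s + b1 0 := by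
    have h := int_step b1 (fun x => -m * x ^ 3 / 6 + (d0 / 2 * x ^ 2 + c₁ * x) + b1 0) hb1d
      (((((differentiable_pow 3).const_mul (-m)).div_const 6).add
        (((differentiable_pow 2).const_mul (d0 / 2)).add
          (differentiable_id.const_mul c₁))).add_const (b1 0))
      (fun s => by
        rw [stepB s]
        have hh : HasDerivAt (fun x : ℝ => -m * x ^ 3 / 6 + (d0 / 2 * x ^ 2 + c₁ * x) + b1 0)
            (-m * ((3 : ℕ) * s ^ 2) / 6 + (d0 / 2 * ((2 : ℕ) * s ^ 1) + c₁ * 1)) s :=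
          ((((hasDerivAt_pow 3 s).const_mul (-m)).div_const 6).add
            (((hasDerivAt_pow 2 s).const_mul (d0 / 2)).add
              ((hasDerivAt_id s).const_mul c₁))).add_const (b1 0)
        rw [hh.deriv]; push_cast; ring)
      (by simp)
    intro s; rw [h s]; ring
  -- b2'' from the arc-length relation
  have hD : ∀ s, deriv (deriv b2) s = -m * s ^ 2 / 2 - c₁ := by
    intro s
    rw [hODE2 s, stepA s, stepB s]; ring
  have stepE : ∀ s, deriv b2 s = -m * s ^ 3 / 6 - c₁ * s + c₂ := by
    have h := int_step (deriv b2) (fun x => -m * x ^ 3 / 6 - c₁ * x + c₂) hb2'd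
      (((((differentiable_pow 3).const_mul (-m)).div_const 6).sub
        (differentiable_id.const_mul c₁)).add_const c₂)
      (fun s => by
        rw [hD s]
        have hh : HasDerivAt (fun x : ℝ => -m * x ^ 3 / 6 - c₁ * x + c₂)
            (-m * ((3 : ℕ) * s ^ 2) / 6 - c₁ * 1) s :=
          ((((hasDerivAt_pow 3 s).const_mul (-m)).div_const 6).sub
            ((hasDerivAt_id s).const_mul c₁)).add_const c₂
        rw [hh.deriv]; push_cast; ring)
      (by simp [hc₂])
    intro s; rw [h s]
  have stepF : ∀ s, b2 s = -m * s ^ 4 / 24 - c₁ / 2 * s ^ 2 + c₂ * s + b2 0 := by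
    have h := int_step b2 (fun x => -m * x ^ 4 / 24 - c₁ / 2 * x ^ 2 + (c₂ * x + b2 0)) hb2d
      (((((differentiable_pow 4).const_mul (-m)).div_const 24).sub
        ((differentiable_pow 2).const_mul (c₁ / 2))).add
        ((differentiable_id.const_mul c₂).add_const (b2 0)))
      (fun s => by
        rw [stepE s]
        have hh : HasDerivAt (fun x : ℝ => -m * x ^ 4 / 24 - c₁ / 2 * x ^ 2 + (c₂ * x + b2 0))
            (-m * ((4 : ℕ) * s ^ 3) / 24 - c₁ / 2 * ((2 : ℕ) * s ^ 1) + c₂ * 1) s :=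
          ((((hasDerivAt_pow 4 s).const_mul (-m)).div_const 24).sub
            ((hasDerivAt_pow 2 s).const_mul (c₁ / 2))).add
            (((hasDerivAt_id s).const_mul c₂).add_const (b2 0))
        rw [hh.deriv]; push_cast; ring)
      (by simp)
    intro s; rw [h s]; ring
  refine ⟨d0 / 2, c₁, c₂, (b1 0, b2 0), fun s => ?_⟩
  have hs : β s = (b1 s, b2 s) := rfl
  rw [hs, stepC s, stepF s]
  simp [Prod.ext_iff]
end

section
/- Let θ : I → ℝ be smooth, m > 0, and define α(s) = (∫ᵇ cosh θ, ∫ˢ sinh θ) and β(s) = m(∫ˢ sinh θ, ∫ˢ cosh θ) (antiderivatives with respect to s). Then ⟨α'(s),α'(s)⟩ = 1, ⟨α'(s), β'(s)⟩ = 0, and ⟨β''(s), N_α(s)⟩ = 0 for all s with θ'(s) ≠ 0, where N_α = α''/√|⟨α'',α''⟩|. Consequently the dual curve γ = α + εβ satisfies κ_γ = κ_α = |θ'|. -/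
/-- The Lorentzian inner product on `𝕃² = ℝ²`. -/
noncomputable def lor (u v : ℝ × ℝ) : ℝ := u.1 * v.1 - u.2 * v.2

private lemma ftc_hasDerivAt {f : ℝ → ℝ} (hf : Continuous f) (s : ℝ) :
    HasDerivAt (fun t => ∫ u in (0:ℝ)..t, f u) (f s) s :=
  intervalIntegral.integral_hasDerivAt_right (hf.intervalIntegrable 0 s)
    hf.aestronglyMeasurable.stronglyMeasurableAtFilter hf.continuousAt

/-- Corollary 2 of the paper (converse direction, spacelike case). For
`α(s) = (∫ˢcosh θ, ∫ˢsinh θ)` and `β(s) = m(∫ˢsinh θ, ∫ˢcosh θ)` with `m > 0`: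
`⟨α',α'⟩ = 1`, `⟨α',β'⟩ = 0` and `⟨β'',N_α⟩ = 0` wherever `θ' ≠ 0`, where
`N_α = α''/√|⟨α'',α''⟩|`; moreover `κ_α = √|⟨α'',α''⟩| = |θ'|`. Hence the dual
curve `γ = α + εβ` has `κ_γ = κ_α + ε(-⟨β'',N_α⟩) = κ_α` purely real. -/
theorem stmt16 (θ : ℝ → ℝ) (hθ : ContDiff ℝ (⊤ : ℕ∞) θ) (m : ℝ) (hm : 0 < m)
    (α β : ℝ → ℝ × ℝ)
    (hαdef : ∀ s, α s =
      (∫ u in (0:ℝ)..s, Real.cosh (θ u), ∫ u in (0:ℝ)..s, Real.sinh (θ u)))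
    (hβdef : ∀ s, β s =
      m • (∫ u in (0:ℝ)..s, Real.sinh (θ u), ∫ u in (0:ℝ)..s, Real.cosh (θ u))) :
    ∀ s : ℝ, deriv θ s ≠ 0 →
      lor (deriv α s) (deriv α s) = 1 ∧
      lor (deriv α s) (deriv β s) = 0 ∧
      lor (deriv (deriv β) s)
        ((Real.sqrt |lor (deriv (deriv α) s) (deriv (deriv α) s)|)⁻¹ •
          deriv (deriv α) s) = 0 ∧
      Real.sqrt |lor (deriv (deriv α) s) (deriv (deriv α) s)| = |deriv θ s| := by
  have hθc : Continuous θ := hθ.continuous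
  have hθd : Differentiable ℝ θ := hθ.differentiable (by simp)
  have hcosh : Continuous fun u => Real.cosh (θ u) := Real.continuous_cosh.comp hθc
  have hsinh : Continuous fun u => Real.sinh (θ u) := Real.continuous_sinh.comp hθc
  have hα1 : ∀ s, HasDerivAt α (Real.cosh (θ s), Real.sinh (θ s)) s := by
    intro s
    have : α = fun t => ((∫ u in (0:ℝ)..t, Real.cosh (θ u)),
        (∫ u in (0:ℝ)..t, Real.sinh (θ u))) := funext hαdef
    rw [this]
    exact HasDerivAt.prodMk (ftc_hasDerivAt hcosh s) (ftc_hasDerivAt hsinh s)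
  have hβ1 : ∀ s, HasDerivAt β (m * Real.sinh (θ s), m * Real.cosh (θ s)) s := by
    intro s
    have : β = fun t => (m * ∫ u in (0:ℝ)..t, Real.sinh (θ u),
        m * ∫ u in (0:ℝ)..t, Real.cosh (θ u)) := by
      funext t; rw [hβdef t]; rfl
    rw [this]
    exact HasDerivAt.prodMk ((ftc_hasDerivAt hsinh s).const_mul m)
      ((ftc_hasDerivAt hcosh s).const_mul m)
  have hdα : deriv α = fun s => (Real.cosh (θ s), Real.sinh (θ s)) :=
    funext fun s => (hα1 s).deriv
  have hdβ : deriv β = fun s => (m * Real.sinh (θ s), m * Real.cosh (θ s)) :=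
    funext fun s => (hβ1 s).deriv
  have hα2 : ∀ s, deriv (deriv α) s =
      (Real.sinh (θ s) * deriv θ s, Real.cosh (θ s) * deriv θ s) := by
    intro s
    rw [hdα]
    exact (HasDerivAt.prodMk ((hθd s).hasDerivAt.cosh) ((hθd s).hasDerivAt.sinh)).deriv
  have hβ2 : ∀ s, deriv (deriv β) s =
      (m * (Real.cosh (θ s) * deriv θ s), m * (Real.sinh (θ s) * deriv θ s)) := by
    intro s
    rw [hdβ]
    exact (HasDerivAt.prodMk (((hθd s).hasDerivAt.sinh).const_mul m)
      (((hθd s).hasDerivAt.cosh).const_mul m)).deriv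
  intro s hθ's
  have hcs : Real.cosh (θ s) ^ 2 - Real.sinh (θ s) ^ 2 = 1 :=
    Real.cosh_sq_sub_sinh_sq (θ s)
  have hlorαα : lor (deriv (deriv α) s) (deriv (deriv α) s) = -(deriv θ s ^ 2) := by
    rw [hα2]; simp only [lor]; nlinarith [hcs]
  have hsqrt : Real.sqrt |lor (deriv (deriv α) s) (deriv (deriv α) s)| = |deriv θ s| := by
    rw [hlorαα, abs_neg, abs_sq, Real.sqrt_sq_eq_abs]
  refine ⟨?_, ?_, ?_, hsqrt⟩
  · rw [hdα]; simp only [lor]; nlinarith [hcs]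
  · rw [hdα, hdβ]; simp only [lor]; ring
  · rw [hβ2, hα2]
    simp only [lor, Prod.smul_fst, Prod.smul_snd, smul_eq_mul]
    ring
end

section
/- Let γ(s) = α(s) + ε β(s) be a spacelike arc-length parametrized curve in 𝔻₁² (⟨α',α'⟩ = 1, ⟨α',β'⟩ = 0) with α(s) = r(sinh(s/r), cosh(s/r)) for a constant r > 0. If the dual curvature κ_γ is the dual constant (1/r) + ε m, then there exist n ∈ ℝ and β₀ ∈ ℝ² such that β(s) = (-m r² sinh(s/r) + (ms+n) r cosh(s/r), -m r² cosh(s/r) + (ms+n) r sinh(s/r)) + β₀. -/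
/-- Theorem 5 of the paper. Let `γ = α + εβ` be a spacelike arc-length parametrized
dual curve (`⟨α',α'⟩ = 1`, `⟨α',β'⟩ = 0`) with `α(s) = r(sinh(s/r), cosh(s/r))`,
`r > 0`. If the dual curvature `κ_γ = κ_α + ε(-⟨β'',N_α⟩)` is the dual constant
`1/r + ε m` — i.e. `⟨β''(s), N_α(s)⟩ = -m` with `N_α(s) = (sinh(s/r), cosh(s/r))` —
then `β(s) = (-mr² sinh(s/r) + (ms+n) r cosh(s/r), -mr² cosh(s/r) + (ms+n) r sinh(s/r)) + β₀`
for some `n ∈ ℝ`, `β₀ ∈ ℝ²`. -/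
theorem stmt19 (r m : ℝ) (hr : 0 < r) (α β : ℝ → ℝ × ℝ)
    (hβ : ContDiff ℝ (⊤ : ℕ∞) β)
    (hαdef : ∀ s, α s = (r * Real.sinh (s / r), r * Real.cosh (s / r)))
    (horth : ∀ s : ℝ, lor (deriv α s) (deriv β s) = 0)
    (hκ : ∀ s : ℝ,
      lor (deriv (deriv β) s) (Real.sinh (s / r), Real.cosh (s / r)) = -m) :
    ∃ (n : ℝ) (β₀ : ℝ × ℝ), ∀ s : ℝ,
      β s = (-m * r ^ 2 * Real.sinh (s / r) + (m * s + n) * r * Real.cosh (s / r),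
             -m * r ^ 2 * Real.cosh (s / r) + (m * s + n) * r * Real.sinh (s / r))
            + β₀ := by
  have hr0 : r ≠ 0 := ne_of_gt hr
  -- derivatives of sinh(s/r), cosh(s/r)
  have hS : ∀ s : ℝ, HasDerivAt (fun t => Real.sinh (t / r)) (Real.cosh (s / r) * (1 / r)) s := by
    intro s
    have h1 : HasDerivAt (fun t : ℝ => t / r) (1 / r) s := by
      simpa using (hasDerivAt_id s).div_const r
    exact (Real.hasDerivAt_sinh (s / r)).comp s h1
  have hC : ∀ s : ℝ, HasDerivAt (fun t => Real.cosh (t / r)) (Real.sinh (s / r) * (1 / r)) s := by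
    intro s
    have h1 : HasDerivAt (fun t : ℝ => t / r) (1 / r) s := by
      simpa using (hasDerivAt_id s).div_const r
    exact (Real.hasDerivAt_cosh (s / r)).comp s h1
  -- components of β
  set b1 : ℝ → ℝ := fun s => (β s).1 with hb1def
  set b2 : ℝ → ℝ := fun s => (β s).2 with hb2def
  have hβ1 : ContDiff ℝ ((⊤ : ℕ∞) : WithTop ℕ∞) b1 := (contDiff_fst.comp hβ).of_le (by simp)
  have hβ2 : ContDiff ℝ ((⊤ : ℕ∞) : WithTop ℕ∞) b2 := (contDiff_snd.comp hβ).of_le (by simp)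
  set d1 : ℝ → ℝ := deriv b1 with hd1def
  set d2 : ℝ → ℝ := deriv b2 with hd2def
  have hd1 : ContDiff ℝ ((⊤ : ℕ∞) : WithTop ℕ∞) d1 := (contDiff_infty_iff_deriv.mp hβ1).2
  have hd2 : ContDiff ℝ ((⊤ : ℕ∞) : WithTop ℕ∞) d2 := (contDiff_infty_iff_deriv.mp hβ2).2
  have hb1d : ∀ s, HasDerivAt b1 (d1 s) s :=
    fun s => ((contDiff_infty_iff_deriv.mp hβ1).1 s).hasDerivAt
  have hb2d : ∀ s, HasDerivAt b2 (d2 s) s :=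
    fun s => ((contDiff_infty_iff_deriv.mp hβ2).1 s).hasDerivAt
  have hd1d : ∀ s, HasDerivAt d1 (deriv d1 s) s :=
    fun s => ((contDiff_infty_iff_deriv.mp hd1).1 s).hasDerivAt
  have hd2d : ∀ s, HasDerivAt d2 (deriv d2 s) s :=
    fun s => ((contDiff_infty_iff_deriv.mp hd2).1 s).hasDerivAt
  -- deriv β and deriv (deriv β) in terms of components
  have hβeq : β = fun t => (b1 t, b2 t) := rfl
  have hdβ : ∀ s, deriv β s = (d1 s, d2 s) := by
    intro s
    rw [hβeq]
    exact ((hb1d s).prodMk (hb2d s)).deriv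
  have hddβ : ∀ s, deriv (deriv β) s = (deriv d1 s, deriv d2 s) := by
    intro s
    have : deriv β = fun t => (d1 t, d2 t) := funext hdβ
    rw [this]
    exact ((hd1d s).prodMk (hd2d s)).deriv
  -- deriv α
  have hdα : ∀ s, deriv α s = (Real.cosh (s / r), Real.sinh (s / r)) := by
    intro s
    have hα1 : HasDerivAt (fun t => r * Real.sinh (t / r)) (Real.cosh (s / r)) s := by
      have := (hS s).const_mul r
      simpa [mul_comm, mul_assoc, mul_div_assoc, hr0] using this.congr_deriv (by field_simp)
    have hα2 : HasDerivAt (fun t => r * Real.cosh (t / r)) (Real.sinh (s / r)) s := by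
      have := (hC s).const_mul r
      simpa using this.congr_deriv (by field_simp)
    have hαeq : α = fun t => (r * Real.sinh (t / r), r * Real.cosh (t / r)) := funext hαdef
    rw [hαeq]
    exact ((hα1).prodMk (hα2)).deriv
  -- rewrite hypotheses
  have horth' : ∀ s, Real.cosh (s / r) * d1 s - Real.sinh (s / r) * d2 s = 0 := by
    intro s
    have := horth s
    rw [hdα s, hdβ s] at this
    simpa [lor] using this
  have hκ' : ∀ s, deriv d1 s * Real.sinh (s / r) - deriv d2 s * Real.cosh (s / r) = -m := by
    intro s
    have := hκ s
    rw [hddβ s] at this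
    simpa [lor] using this
  set n : ℝ := d2 0 with hndef
  -- the functions F, G
  set F : ℝ → ℝ := fun s => d1 s - (m * s + n) * Real.sinh (s / r) with hFdef
  set G : ℝ → ℝ := fun s => d2 s - (m * s + n) * Real.cosh (s / r) with hGdef
  have hFd : ∀ s, HasDerivAt F (deriv d1 s - (m * Real.sinh (s / r)
      + (m * s + n) * (Real.cosh (s / r) * (1 / r)))) s := by
    intro s
    exact (hd1d s).sub (((hasDerivAt_id s).const_mul m |>.add_const n).mul (hS s) |>.congr_deriv
      (by simp only [id_eq]; ring))
  have hGd : ∀ s, HasDerivAt G (deriv d2 s - (m * Real.cosh (s / r)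
      + (m * s + n) * (Real.sinh (s / r) * (1 / r)))) s := by
    intro s
    exact (hd2d s).sub (((hasDerivAt_id s).const_mul m |>.add_const n).mul (hC s) |>.congr_deriv
      (by simp only [id_eq]; ring))
  -- k = sinh F - cosh G has zero derivative
  set k : ℝ → ℝ := fun s => Real.sinh (s / r) * F s - Real.cosh (s / r) * G s with hkdef
  have hkd : ∀ s, HasDerivAt k 0 s := by
    intro s
    have h : HasDerivAt k _ s := ((hS s).mul (hFd s)).sub ((hC s).mul (hGd s))
    have hcs := Real.cosh_sq_sub_sinh_sq (s / r)
    have h1 := horth' s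
    have h2 := hκ' s
    convert h using 1
    simp only [hFdef, hGdef]
    linear_combination (-(1/r)) * h1 + (-1 : ℝ) * h2 + (-m) * hcs
  have hkconst : ∀ s, k s = k 0 :=
    fun s => is_const_of_deriv_eq_zero (fun x => (hkd x).differentiableAt)
      (fun x => (hkd x).deriv) s 0
  have hk0 : k 0 = 0 := by
    simp [hkdef, hFdef, hGdef, hndef]
  have hkz : ∀ s, Real.sinh (s / r) * F s - Real.cosh (s / r) * G s = 0 := by
    intro s
    have := hkconst s
    rw [hk0] at this
    simpa [hkdef] using this
  have horthFG : ∀ s, Real.cosh (s / r) * F s - Real.sinh (s / r) * G s = 0 := by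
    intro s
    have h1 := horth' s
    simp only [hFdef, hGdef]
    linear_combination h1
  have hF0 : ∀ s, F s = 0 := by
    intro s
    have h1 := hkz s
    have h2 := horthFG s
    have hcs := Real.cosh_sq_sub_sinh_sq (s / r)
    linear_combination Real.cosh (s / r) * h2 - Real.sinh (s / r) * h1 - F s * hcs
  have hG0 : ∀ s, G s = 0 := by
    intro s
    have h1 := hkz s
    have hF := hF0 s
    have hcp := Real.cosh_pos (s / r)
    have hmul : Real.cosh (s / r) * G s = 0 := by
      linear_combination Real.sinh (s / r) * hF - h1
    exact (mul_eq_zero.mp hmul).resolve_left (ne_of_gt hcp)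
  have hd1eq : ∀ s, d1 s = (m * s + n) * Real.sinh (s / r) := by
    intro s
    have := hF0 s
    simp only [hFdef] at this
    linarith
  have hd2eq : ∀ s, d2 s = (m * s + n) * Real.cosh (s / r) := by
    intro s
    have := hG0 s
    simp only [hGdef] at this
    linarith
  -- target component functions
  set c1 : ℝ → ℝ := fun s => -m * r ^ 2 * Real.sinh (s / r) + (m * s + n) * r * Real.cosh (s / r)
    with hc1def
  set c2 : ℝ → ℝ := fun s => -m * r ^ 2 * Real.cosh (s / r) + (m * s + n) * r * Real.sinh (s / r)
    with hc2def
  have hc1d : ∀ s, HasDerivAt c1 ((m * s + n) * Real.sinh (s / r)) s := by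
    intro s
    have h : HasDerivAt c1 _ s := ((hS s).const_mul (-m * r ^ 2)).add
      ((((hasDerivAt_id s).const_mul m |>.add_const n).mul_const r).mul (hC s) |>.congr_deriv rfl)
    convert h using 1
    simp only [id_eq]
    field_simp
    ring
  have hc2d : ∀ s, HasDerivAt c2 ((m * s + n) * Real.cosh (s / r)) s := by
    intro s
    have h : HasDerivAt c2 _ s := ((hC s).const_mul (-m * r ^ 2)).add
      ((((hasDerivAt_id s).const_mul m |>.add_const n).mul_const r).mul (hS s) |>.congr_deriv rfl)
    convert h using 1
    simp only [id_eq]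
    field_simp
    ring
  -- b1 - c1 and b2 - c2 are constant
  have hp1 : ∀ s, b1 s - c1 s = b1 0 - c1 0 := by
    intro s
    exact is_const_of_deriv_eq_zero (f := fun t => b1 t - c1 t)
      (fun x => ((hb1d x).sub (hc1d x)).differentiableAt)
      (fun x => by
        rw [show deriv (fun t => b1 t - c1 t) x = d1 x - (m * x + n) * Real.sinh (x / r) from ((hb1d x).sub (hc1d x)).deriv, hd1eq x]; ring) s 0
  have hp2 : ∀ s, b2 s - c2 s = b2 0 - c2 0 := by
    intro s
    exact is_const_of_deriv_eq_zero (f := fun t => b2 t - c2 t)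
      (fun x => ((hb2d x).sub (hc2d x)).differentiableAt)
      (fun x => by
        rw [show deriv (fun t => b2 t - c2 t) x = d2 x - (m * x + n) * Real.cosh (x / r) from ((hb2d x).sub (hc2d x)).deriv, hd2eq x]; ring) s 0
  refine ⟨n, (b1 0 - c1 0, b2 0 - c2 0), fun s => ?_⟩
  have h1 := hp1 s
  have h2 := hp2 s
  ext
  · show b1 s = c1 s + (b1 0 - c1 0)
    linarith
  · show b2 s = c2 s + (b2 0 - c2 0)
    linarith
end
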